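/- arXiv:1310.4865 — 4 statements merged into one kernel-verified Lean document; each statement's English description precedes it below -/
import Mathlib

section
/- Let p ≥ 1 be an integer and let f be a Schwartz function on ℝ^p. Then the zeta integral Z(f,t) = ∫_{ℝ^p} f(x) ‖x‖^t dx converges absolutely for every t ∈ ℂ with Re(t) > −p, and the function t ↦ Z(f,t) is holomorphic on the half-plane {t ∈ ℂ : Re(t) > −p}. -/
/-!
Near the origin `f` is bounded and `‖x‖ ^ s` is integrable on the unit ball of `ℝ^p` exactly
when `s > -p` (polar coordinates); away from it, `f` decays faster than any power of `‖x‖`.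
Holomorphy follows by differentiating under the integral sign: since
`|log r| ≤ (r ^ δ + r ^ (-δ)) / δ`, the `t`-derivative `f x * ‖x‖ ^ t * log ‖x‖` is dominated,
locally uniformly in `t`, by `‖f x‖ * (‖x‖ ^ a + ‖x‖ ^ b)` with `-p < a < b`.
-/

open MeasureTheory Complex

open Real in
theorem Real.abs_log_le_rpow_add_rpow_neg_div {r ε : ℝ} (hr : 0 < r) (hε : 0 < ε) :
    |log r| ≤ (r ^ ε + r ^ (-ε)) / ε := by
  rcases le_or_gt 1 r with h | h
  · calc |log r| = log r := abs_of_nonneg (log_nonneg h)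
      _ ≤ r ^ ε / ε := log_le_rpow_div hr.le hε
      _ ≤ (r ^ ε + r ^ (-ε)) / ε := by gcongr; exact le_add_of_nonneg_right (by positivity)
  · calc |log r| = log r⁻¹ := by rw [abs_of_neg (log_neg hr h), log_inv]
      _ ≤ r⁻¹ ^ ε / ε := log_le_rpow_div (by positivity) hε
      _ = r ^ (-ε) / ε := by rw [inv_rpow hr.le, rpow_neg hr.le]
      _ ≤ (r ^ ε + r ^ (-ε)) / ε := by gcongr; exact le_add_of_nonneg_left (by positivity)

theorem Real.rpow_le_rpow_add_rpow {r a b u : ℝ} (hr : 0 < r) (ha : a ≤ u) (hb : u ≤ b) :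
    r ^ u ≤ r ^ a + r ^ b := by
  rcases le_or_gt 1 r with h | h
  · exact (rpow_le_rpow_of_exponent_le h hb).trans (le_add_of_nonneg_left (by positivity))
  · exact (rpow_le_rpow_of_exponent_ge hr h.le ha).trans (le_add_of_nonneg_right (by positivity))

namespace SchwartzMap

variable {E : Type*} [NormedAddCommGroup E] [NormedSpace ℝ E] [MeasurableSpace E] [BorelSpace E]
  (μ : Measure E)

theorem aestronglyMeasurable_mul_cpow_norm (f : 𝓢(E, ℂ)) (t : ℂ) :
    AEStronglyMeasurable (fun x ↦ f x * (‖x‖ : ℂ) ^ t) μ :=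
  f.continuous.aestronglyMeasurable.mul
    ((measurable_ofReal.comp measurable_norm).pow_const t).aestronglyMeasurable

variable [FiniteDimensional ℝ E] [Nontrivial E] [μ.IsAddHaarMeasure]

theorem integrable_rpow_norm_mul_norm {F : Type*} [NormedAddCommGroup F] [NormedSpace ℝ F]
    (f : 𝓢(E, F)) {s : ℝ} (hs : -(Module.finrank ℝ E : ℝ) < s) :
    Integrable (fun x ↦ ‖x‖ ^ s * ‖f x‖) μ := by
  have hmeas : AEStronglyMeasurable (fun x ↦ ‖x‖ ^ s * ‖f x‖) μ :=
    (measurable_norm.pow_const s).aestronglyMeasurable.mul f.continuous.norm.aestronglyMeasurable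
  rw [← integrableOn_univ, ← Set.union_compl_self (Metric.ball (0 : E) 1)]
  refine IntegrableOn.union ?_ ?_
  · refine integrableOn_ball_of_norm_le_rpow Module.finrank_pos
      (C := SchwartzMap.seminorm ℝ 0 0 f) (α := -s) (by linarith) (.of_forall fun x ↦ ?_) hmeas
    rw [neg_neg, norm_mul, norm_norm, Real.norm_of_nonneg (by positivity), mul_comm]
    gcongr
    simpa using le_seminorm ℝ 0 0 f x
  · refine (f.integrable_pow_mul μ ⌈s⌉₊).integrableOn.mono' hmeas.restrict ?_
    refine (ae_restrict_iff' measurableSet_ball.compl).2 (.of_forall fun x hx ↦ ?_)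
    have hx : 1 ≤ ‖x‖ := by simpa using hx
    rw [norm_mul, norm_norm, Real.norm_of_nonneg (by positivity), ← Real.rpow_natCast]
    gcongr
    exact Nat.le_ceil s

theorem integrable_mul_cpow_norm (f : 𝓢(E, ℂ)) {t : ℂ}
    (ht : -(Module.finrank ℝ E : ℝ) < t.re) :
    Integrable (fun x ↦ f x * (‖x‖ : ℂ) ^ t) μ := by
  refine (f.integrable_rpow_norm_mul_norm μ ht).mono'
    (f.aestronglyMeasurable_mul_cpow_norm μ t) ?_
  filter_upwards [μ.ae_ne 0] with x hx
  rw [norm_mul, norm_cpow_eq_rpow_re_of_pos (norm_pos_iff.2 hx), mul_comm]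

theorem hasDerivAt_integral_mul_cpow_norm (f : 𝓢(E, ℂ)) {t₀ : ℂ}
    (ht₀ : -(Module.finrank ℝ E : ℝ) < t₀.re) :
    HasDerivAt (fun t ↦ ∫ x, f x * (‖x‖ : ℂ) ^ t ∂μ)
      (∫ x, f x * ((‖x‖ : ℂ) ^ t₀ * log ‖x‖) ∂μ) t₀ := by
  set δ := (t₀.re + Module.finrank ℝ E) / 3 with hδ_def
  have hδ : 0 < δ := by linarith
  set a := t₀.re - 2 * δ
  set b := t₀.re + 2 * δ
  have ha : -(Module.finrank ℝ E : ℝ) < a := by linarith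
  have h_bound : ∀ᵐ x ∂μ, ∀ t ∈ Metric.ball t₀ δ,
      ‖f x * ((‖x‖ : ℂ) ^ t * log ‖x‖)‖ ≤ 2 / δ * (‖x‖ ^ a * ‖f x‖ + ‖x‖ ^ b * ‖f x‖) := by
    filter_upwards [μ.ae_ne 0] with x hx t ht
    have hr : 0 < ‖x‖ := norm_pos_iff.2 hx
    have hre : |t.re - t₀.re| < δ := (abs_re_le_norm (t - t₀)).trans_lt (mem_ball_iff_norm.1 ht)
    rw [abs_lt] at hre
    rw [norm_mul, norm_mul, norm_cpow_eq_rpow_re_of_pos hr, ← ofReal_log (norm_nonneg x),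
      norm_real, Real.norm_eq_abs]
    calc ‖f x‖ * (‖x‖ ^ t.re * |Real.log ‖x‖|)
        ≤ ‖f x‖ * (‖x‖ ^ t.re * ((‖x‖ ^ δ + ‖x‖ ^ (-δ)) / δ)) := by
          gcongr; exact Real.abs_log_le_rpow_add_rpow_neg_div hr hδ
      _ = ‖f x‖ * (‖x‖ ^ (t.re + δ) + ‖x‖ ^ (t.re + -δ)) / δ := by
          rw [Real.rpow_add hr, Real.rpow_add hr]; ring
      _ ≤ ‖f x‖ * ((‖x‖ ^ a + ‖x‖ ^ b) + (‖x‖ ^ a + ‖x‖ ^ b)) / δ := by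
          gcongr <;> exact Real.rpow_le_rpow_add_rpow hr (by linarith) (by linarith)
      _ = 2 / δ * (‖x‖ ^ a * ‖f x‖ + ‖x‖ ^ b * ‖f x‖) := by ring
  have h_diff : ∀ᵐ x ∂μ, ∀ t ∈ Metric.ball t₀ δ,
      HasDerivAt (fun t ↦ f x * (‖x‖ : ℂ) ^ t) (f x * ((‖x‖ : ℂ) ^ t * log ‖x‖)) t := by
    filter_upwards [μ.ae_ne 0] with x hx t _
    exact ((hasStrictDerivAt_const_cpow
      (.inl (ofReal_ne_zero.2 (norm_ne_zero_iff.2 hx)))).hasDerivAt).const_mul (f x)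
  refine (hasDerivAt_integral_of_dominated_loc_of_deriv_le (Metric.ball_mem_nhds t₀ hδ)
    (.of_forall (f.aestronglyMeasurable_mul_cpow_norm μ)) (f.integrable_mul_cpow_norm μ ht₀)
    ?_ h_bound ?_ h_diff).2
  · fun_prop
  · exact ((f.integrable_rpow_norm_mul_norm μ ha).add
      (f.integrable_rpow_norm_mul_norm μ (by linarith))).const_mul _

theorem differentiableOn_integral_mul_cpow_norm (f : 𝓢(E, ℂ)) :
    DifferentiableOn ℂ (fun t ↦ ∫ x, f x * (‖x‖ : ℂ) ^ t ∂μ)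
      {t : ℂ | -(Module.finrank ℝ E : ℝ) < t.re} := fun _ ht ↦
  (f.hasDerivAt_integral_mul_cpow_norm μ ht).differentiableAt.differentiableWithinAt

end SchwartzMap

/-- For a Schwartz function `f` on `ℝ^p`, the zeta integral
`Z(f,t) = ∫ f(x) ‖x‖^t dx` converges absolutely for `Re t > -p`, and is a
holomorphic function of `t` on that half-plane. -/
theorem stmt1 (p : ℕ) (hp : 1 ≤ p) (f : SchwartzMap (EuclideanSpace ℝ (Fin p)) ℂ) :
    (∀ t : ℂ, -(p : ℝ) < t.re →
      Integrable (fun x : EuclideanSpace ℝ (Fin p) => f x * (‖x‖ : ℂ) ^ t) volume) ∧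
    DifferentiableOn ℂ
      (fun t : ℂ => ∫ x : EuclideanSpace ℝ (Fin p), f x * (‖x‖ : ℂ) ^ t)
      {t : ℂ | -(p : ℝ) < t.re} := by
  have hdim : Module.finrank ℝ (EuclideanSpace ℝ (Fin p)) = p := finrank_euclideanSpace_fin
  have : Nontrivial (EuclideanSpace ℝ (Fin p)) :=
    Module.nontrivial_of_finrank_pos (R := ℝ) (by omega)
  refine ⟨fun t ht ↦ f.integrable_mul_cpow_norm volume (by rwa [hdim]), ?_⟩
  simpa only [hdim] using f.differentiableOn_integral_mul_cpow_norm volume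
end

section
/- Let n ≥ 1 and let d, e be nonnegative integers; set μ = d(n−1) + (e+1). Let σ, τ ∈ ℂ satisfy −(e+1) < Re(τ) < Re(σ) − d(n−1). Then the integral ∫_Ω ∏_{j=1}^n x_j^{τ+e} (1+x_j²)^{−(σ+μ)/2} ∏_{1≤i<j≤n} (x_i² − x_j²)^d dx_1⋯dx_n over the cone Ω = {(x_1,…,x_n) ∈ ℝ^n : x_1 > x_2 > ⋯ > x_n > 0} converges absolutely. -/
/-!
On the cone `x₁ > ⋯ > xₙ > 0` we have `0 ≤ xᵢ² − xⱼ² ≤ xᵢ²` for `i < j`, so the Vandermonde-type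
factor is at most `∏ᵢ xᵢ^(2d·#{j > i})`. The integrand is then dominated by a product of
one-variable functions `t ^ aⱼ (1 + t²)^(−b)` on `(0, ∞)`, with `aⱼ = Re τ + e + 2d(n − 1 − j)` and
`b = (Re σ + μ)/2`; each is integrable because `aⱼ > −1` (near `0`) and `aⱼ − 2b < −1` (near `∞`),
and these are exactly the two inequalities on `Re τ`.
-/

open MeasureTheory Complex Set

theorem integrableOn_Ioc_rpow_mul_one_add_sq_rpow {a : ℝ} (ha : -1 < a) (c : ℝ) :
    IntegrableOn (fun t : ℝ => t ^ a * (1 + t ^ 2) ^ c) (Ioc 0 1) := by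
  have hpow : IntegrableOn (fun t : ℝ => t ^ a) (Icc 0 1) := by
    rw [integrableOn_Icc_iff_integrableOn_Ioc,
      ← intervalIntegrable_iff_integrableOn_Ioc_of_le zero_le_one]
    exact intervalIntegral.intervalIntegrable_rpow' ha
  refine (hpow.mul_continuousOn ?_ isCompact_Icc).mono_set Ioc_subset_Icc_self
  exact (Continuous.rpow_const (by fun_prop) fun t => Or.inl (by positivity)).continuousOn

theorem integrableOn_Ioi_one_rpow_mul_one_add_sq_rpow_neg {a b : ℝ} (hb : 0 ≤ b)
    (hab : a - 2 * b < -1) :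
    IntegrableOn (fun t : ℝ => t ^ a * (1 + t ^ 2) ^ (-b)) (Ioi 1) := by
  refine (integrableOn_Ioi_rpow_of_lt hab one_pos).mono' (by fun_prop) ?_
  filter_upwards [ae_restrict_mem measurableSet_Ioi] with t (ht : 1 < t)
  have ht0 : 0 < t := one_pos.trans ht
  rw [Real.norm_of_nonneg (by positivity), sub_eq_add_neg, Real.rpow_add ht0, ← mul_neg,
    Real.rpow_mul ht0.le, Real.rpow_two]
  gcongr t ^ a * ?_
  exact Real.rpow_le_rpow_of_nonpos (by positivity) (by linarith) (neg_nonpos.2 hb)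

theorem integrableOn_Ioi_rpow_mul_one_add_sq_rpow_neg {a b : ℝ} (ha : -1 < a)
    (hab : a - 2 * b < -1) :
    IntegrableOn (fun t : ℝ => t ^ a * (1 + t ^ 2) ^ (-b)) (Ioi 0) := by
  rw [← Ioc_union_Ioi_eq_Ioi zero_le_one]
  exact (integrableOn_Ioc_rpow_mul_one_add_sq_rpow ha _).union
    (integrableOn_Ioi_one_rpow_mul_one_add_sq_rpow_neg (by linarith) hab)

theorem prod_prod_Ioi_sq_sub_sq_pow_le {ι : Type*} [Fintype ι] [LinearOrder ι]
    [LocallyFiniteOrderTop ι] (x : ι → ℝ) (d : ℕ) (hx : ∀ i j, i < j → x j ^ 2 ≤ x i ^ 2) :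
    ∏ i, ∏ j ∈ Finset.Ioi i, (x i ^ 2 - x j ^ 2) ^ d ≤
      ∏ i, x i ^ (2 * d * (Finset.Ioi i).card) := by
  have hnonneg : ∀ i, ∀ j ∈ Finset.Ioi i, 0 ≤ x i ^ 2 - x j ^ 2 := fun i j hj =>
    sub_nonneg.2 (hx i j (Finset.mem_Ioi.1 hj))
  refine Finset.prod_le_prod (fun i _ => Finset.prod_nonneg fun j hj =>
    pow_nonneg (hnonneg i j hj) d) fun i _ => ?_
  calc ∏ j ∈ Finset.Ioi i, (x i ^ 2 - x j ^ 2) ^ d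
      ≤ ∏ j ∈ Finset.Ioi i, (x i ^ 2) ^ d :=
        Finset.prod_le_prod (fun j hj => pow_nonneg (hnonneg i j hj) d) fun j hj =>
          pow_le_pow_left₀ (hnonneg i j hj) (sub_le_self _ (sq_nonneg (x j))) d
    _ = x i ^ (2 * d * (Finset.Ioi i).card) := by
      rw [Finset.prod_const, ← pow_mul, ← pow_mul, mul_assoc]

noncomputable def zetaIntegrand (n d e : ℕ) (μ : ℝ) (σ τ : ℂ) (x : Fin n → ℝ) : ℂ :=
  (∏ j : Fin n, (x j : ℂ) ^ (τ + (e : ℂ)) *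
      ((1 + (x j) ^ 2 : ℝ) : ℂ) ^ (-(σ + (μ : ℂ)) / 2)) *
    ∏ i : Fin n, ∏ j ∈ Finset.Ioi i, (((x i) ^ 2 - (x j) ^ 2 : ℝ) : ℂ) ^ (d : ℕ)

theorem norm_zetaIntegrand_le {n d e : ℕ} {μ : ℝ} {σ τ : ℂ} {x : Fin n → ℝ}
    (hdec : ∀ i j, i < j → x j < x i) (hpos : ∀ j, 0 < x j) :
    ‖zetaIntegrand n d e μ σ τ x‖ ≤
      ∏ j, x j ^ (τ.re + e + 2 * d * (Finset.Ioi j).card) *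
        (1 + x j ^ 2) ^ (-((σ.re + μ) / 2)) := by
  have hsq : ∀ i j, i < j → x j ^ 2 ≤ x i ^ 2 := fun i j hij =>
    pow_le_pow_left₀ (hpos j).le (hdec i j hij).le 2
  have hre : (-(σ + (μ : ℂ)) / 2).re = -((σ.re + μ) / 2) := by simp; ring
  calc ‖zetaIntegrand n d e μ σ τ x‖
      = (∏ j, x j ^ (τ.re + e) * (1 + x j ^ 2) ^ (-((σ.re + μ) / 2))) *
          ∏ i, ∏ j ∈ Finset.Ioi i, (x i ^ 2 - x j ^ 2) ^ d := by
        simp only [zetaIntegrand, norm_mul, norm_prod, norm_pow, Complex.norm_real,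
          Complex.norm_cpow_eq_rpow_re_of_pos (hpos _)]
        congr 1
        · refine Finset.prod_congr rfl fun j _ => ?_
          rw [Complex.norm_cpow_eq_rpow_re_of_pos (by positivity), hre]
          simp
        · refine Finset.prod_congr rfl fun i _ => Finset.prod_congr rfl fun j hj => ?_
          rw [Real.norm_of_nonneg (sub_nonneg.2 (hsq i j (Finset.mem_Ioi.1 hj)))]
    _ ≤ (∏ j, x j ^ (τ.re + e) * (1 + x j ^ 2) ^ (-((σ.re + μ) / 2))) *
          ∏ i, x i ^ (2 * d * (Finset.Ioi i).card) := by
        refine mul_le_mul_of_nonneg_left (prod_prod_Ioi_sq_sub_sq_pow_le x d hsq) ?_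
        exact Finset.prod_nonneg fun j _ => by have := hpos j; positivity
    _ = _ := by
        rw [← Finset.prod_mul_distrib]
        refine Finset.prod_congr rfl fun j _ => ?_
        rw [← Real.rpow_natCast (x j) (2 * d * _), mul_right_comm, ← Real.rpow_add (hpos j)]
        push_cast
        ring_nf

theorem stmt4_general (n : ℕ) (d e : ℕ) (μ : ℝ)
    (hμ : μ = (d : ℝ) * ((n : ℝ) - 1) + ((e : ℝ) + 1))
    (σ τ : ℂ) (h₁ : -((e : ℝ) + 1) < τ.re) (h₂ : τ.re < σ.re - (d : ℝ) * ((n : ℝ) - 1)) :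
    IntegrableOn
      (fun x : Fin n → ℝ =>
        (∏ j : Fin n, (x j : ℂ) ^ (τ + (e : ℂ)) *
            ((1 + (x j) ^ 2 : ℝ) : ℂ) ^ (-(σ + (μ : ℂ)) / 2)) *
          ∏ i : Fin n, ∏ j ∈ Finset.Ioi i, (((x i) ^ 2 - (x j) ^ 2 : ℝ) : ℂ) ^ (d : ℕ))
      {x : Fin n → ℝ | (∀ i j : Fin n, i < j → x j < x i) ∧ ∀ j : Fin n, 0 < x j}
      volume := by
  set b : ℝ := (σ.re + μ) / 2
  set a : Fin n → ℝ := fun j => τ.re + e + 2 * d * (Finset.Ioi j).card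
  have hcard (j : Fin n) : ((Finset.Ioi j).card : ℝ) + 1 ≤ n := by
    have : (Finset.Ioi j).card + 1 ≤ n := by rw [Fin.card_Ioi]; omega
    exact_mod_cast this
  have ha (j : Fin n) : -1 < a j := by
    have : (0 : ℝ) ≤ 2 * d * (Finset.Ioi j).card := by positivity
    simp only [a]
    linarith
  have hab (j : Fin n) : a j - 2 * b < -1 := by
    have := mul_le_mul_of_nonneg_left (hcard j) (Nat.cast_nonneg (α := ℝ) d)
    simp only [a, b, hμ]
    linarith
  have hdom : Integrable fun x : Fin n → ℝ =>
      ∏ j, (Ioi 0).indicator (fun t => t ^ a j * (1 + t ^ 2) ^ (-b)) (x j) :=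
    Integrable.fintype_prod fun j => (integrable_indicator_iff measurableSet_Ioi).2
      (integrableOn_Ioi_rpow_mul_one_add_sq_rpow_neg (ha j) (hab j))
  have hcone : MeasurableSet
      {x : Fin n → ℝ | (∀ i j : Fin n, i < j → x j < x i) ∧ ∀ j : Fin n, 0 < x j} := by
    measurability
  refine hdom.integrableOn.mono' (by fun_prop : Measurable _).aestronglyMeasurable
    (ae_restrict_of_forall_mem hcone ?_)
  rintro x ⟨hdec, hpos⟩
  simp only [indicator_of_mem (mem_Ioi.2 (hpos _))]
  exact norm_zetaIntegrand_le hdec hpos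

/-- Absolute convergence of the polar-coordinates zeta integral for the spherical vector:
for `−(e+1) < Re τ < Re σ − d(n−1)` and `μ = d(n−1)+(e+1)`, the integral over the cone
`x₁ > x₂ > ⋯ > xₙ > 0` of `∏ⱼ xⱼ^(τ+e) (1+xⱼ²)^(−(σ+μ)/2) ∏_{i<j} (xᵢ²−xⱼ²)^d`
converges absolutely. -/
theorem stmt4 (n : ℕ) (hn : 1 ≤ n) (d e : ℕ) (μ : ℝ)
    (hμ : μ = (d : ℝ) * ((n : ℝ) - 1) + ((e : ℝ) + 1))
    (σ τ : ℂ) (h₁ : -((e : ℝ) + 1) < τ.re) (h₂ : τ.re < σ.re - (d : ℝ) * ((n : ℝ) - 1)) :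
    IntegrableOn
      (fun x : Fin n → ℝ =>
        (∏ j : Fin n, (x j : ℂ) ^ (τ + (e : ℂ)) *
            ((1 + (x j) ^ 2 : ℝ) : ℂ) ^ (-(σ + (μ : ℂ)) / 2)) *
          ∏ i : Fin n, ∏ j ∈ Finset.Ioi i, (((x i) ^ 2 - (x j) ^ 2 : ℝ) : ℂ) ^ (d : ℕ))
      {x : Fin n → ℝ | (∀ i j : Fin n, i < j → x j < x i) ∧ ∀ j : Fin n, 0 < x j}
      volume :=
  stmt4_general n d e μ hμ σ τ h₁ h₂
end

section
/- Let n ≥ 1 and let σ ∈ ℝ. The function h_σ(X) = det(I_n + XᵀX)^{−(σ+n)/2} on the space M_n(ℝ) of n×n real matrices is integrable with respect to Lebesgue measure whenever σ > n − 1, and is square-integrable whenever σ > −1/2. -/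
/-!
Split `X ∈ M_{m×n}(ℝ)` into its first row `v` and the remaining rows `Y`. Then
`XᵀX = YᵀY + v vᵀ`, so with `A = 1 + YᵀY` the matrix determinant lemma gives
`det (1 + XᵀX) = det A · (1 + vᵀ A⁻¹ v)`, and the substitution `v = A^{1/2} u` yields
`∫ det (1 + XᵀX)^{-s} dv = det (1 + YᵀY)^{-(s - 1/2)} · ∫_{ℝⁿ} (1 + |u|²)^{-s} du`.
The last integral is finite for `2s > n`, so by induction on the number of rows
`det (1 + XᵀX)^{-s}` is integrable on `M_{m×n}(ℝ)` as soon as `2s > n + m - 1`.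
For `m = n` take `s = (σ + n)/2` for `h_σ`, and `s = σ + n` for `h_σ²`.
-/

open MeasureTheory Matrix

open scoped ENNReal MatrixOrder

section
variable {ι : Type*} [Fintype ι]

lemma integrable_rpow_neg_one_add_dotProduct_self {s : ℝ} (hs : Fintype.card ι < 2 * s) :
    Integrable fun u : ι → ℝ => (1 + u ⬝ᵥ u) ^ (-s) := by
  have h := integrable_rpow_neg_one_add_norm_sq (E := EuclideanSpace ℝ ι) (μ := volume)
    (r := 2 * s) (by simpa using hs)
  rw [← (PiLp.volume_preserving_toLp ι).integrable_comp_emb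
    (MeasurableEquiv.toLp 2 (ι → ℝ)).measurableEmbedding] at h
  refine h.congr (.of_forall fun u => ?_)
  have hnorm : ‖WithLp.toLp 2 u‖ ^ 2 = u ⬝ᵥ u := by
    rw [EuclideanSpace.real_norm_sq_eq]
    simp [dotProduct, sq]
  rw [Function.comp_apply, hnorm, neg_div, mul_div_cancel_left₀ _ two_ne_zero]

variable [DecidableEq ι]

lemma posDef_one_add_transpose_mul {κ : Type*} [Fintype κ] (A : Matrix κ ι ℝ) :
    (1 + Aᵀ * A).PosDef :=
  PosDef.one.add_posSemidef (by simpa using posSemidef_conjTranspose_mul_self A)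

lemma det_add_vecMulVec {R : Type*} [CommRing R] {A : Matrix ι ι R} (hA : IsUnit A.det)
    (u v : ι → R) :
    (A + vecMulVec u v).det = A.det * (1 + v ⬝ᵥ (A⁻¹ *ᵥ u)) := by
  rw [vecMulVec_eq Unit, det_add_mul _ _ hA, Matrix.mul_assoc, ← replicateCol_mulVec,
    det_one_add_mul_comm, det_one_add_replicateCol_mul_replicateRow]

lemma lintegral_comp_mulVec {M : Matrix ι ι ℝ} (hM : M.det ≠ 0) {g : (ι → ℝ) → ℝ≥0∞}
    (hg : Measurable g) : ∫⁻ u, g (M *ᵥ u) = ENNReal.ofReal |M.det|⁻¹ * ∫⁻ v, g v := by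
  rw [← abs_inv, ← smul_eq_mul, ← lintegral_smul_measure,
    ← Real.map_matrix_volume_pi_eq_smul_volume_pi hM,
    lintegral_map hg (LinearMap.continuous_of_finiteDimensional _).measurable]
  rfl

lemma lintegral_comp_dotProduct_inv_mulVec {A : Matrix ι ι ℝ} (hA : A.PosDef) {f : ℝ → ℝ≥0∞}
    (hf : Measurable f) :
    ∫⁻ v : ι → ℝ, f (v ⬝ᵥ (A⁻¹ *ᵥ v)) =
      ENNReal.ofReal √A.det * ∫⁻ u : ι → ℝ, f (u ⬝ᵥ u) := by
  set S := CFC.sqrt A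
  have hS : S.PosSemidef := (CFC.sqrt_nonneg A).posSemidef
  have hSS : S * S = A := CFC.sqrt_mul_sqrt_self A hA.posSemidef.nonneg
  have hdetS : S.det = √A.det := by
    rw [← hSS, det_mul, Real.sqrt_mul_self hS.det_nonneg]
  have hdetS_pos : 0 < S.det := hdetS ▸ Real.sqrt_pos.2 hA.det_pos
  have hquad (u : ι → ℝ) : (S *ᵥ u) ⬝ᵥ (A⁻¹ *ᵥ (S *ᵥ u)) = u ⬝ᵥ u := by
    have hST : Sᵀ = S := hS.isHermitian
    have hSA : S * (A⁻¹ * S) = 1 := by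
      rw [← hSS, Matrix.mul_inv_rev, Matrix.mul_assoc, nonsing_inv_mul _ hdetS_pos.ne'.isUnit,
        Matrix.mul_one, mul_nonsing_inv _ hdetS_pos.ne'.isUnit]
    calc (S *ᵥ u) ⬝ᵥ (A⁻¹ *ᵥ (S *ᵥ u)) = (u ᵥ* S) ⬝ᵥ ((A⁻¹ * S) *ᵥ u) := by
          rw [mulVec_mulVec, ← vecMul_transpose, hST]
      _ = u ⬝ᵥ ((S * (A⁻¹ * S)) *ᵥ u) := by rw [← dotProduct_mulVec, mulVec_mulVec]
      _ = u ⬝ᵥ u := by rw [hSA, one_mulVec]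
  have hchange := lintegral_comp_mulVec hdetS_pos.ne'
    (hf.comp (f := fun v => v ⬝ᵥ (A⁻¹ *ᵥ v)) (Continuous.measurable (by fun_prop)))
  simp only [Function.comp_apply, hquad] at hchange
  rw [hchange, abs_of_pos hdetS_pos, hdetS, ← mul_assoc, ← ENNReal.ofReal_mul (by positivity),
    mul_inv_cancel₀ (Real.sqrt_pos.2 hA.det_pos).ne', ENNReal.ofReal_one, one_mul]

end

lemma transpose_mul_self_of_cons {R : Type*} [NonUnitalNonAssocSemiring R] {m n : ℕ}
    (v : Fin n → R) (Y : Fin m → Fin n → R) :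
    (of (Fin.cons v Y : Fin (m + 1) → Fin n → R))ᵀ * of (Fin.cons v Y) =
      (of Y)ᵀ * of Y + vecMulVec v v := by
  ext i j
  simp [mul_apply, Fin.sum_univ_succ, vecMulVec_apply, add_comm]

lemma measurable_rpow_det_one_add_transpose_mul {m n : ℕ} (s : ℝ) :
    Measurable fun X : Fin m → Fin n → ℝ => (1 + (of X)ᵀ * of X).det ^ s :=
  (Continuous.matrix_det (by fun_prop)).measurable.pow_const s

lemma lintegral_ofReal_rpow_neg_det_one_add_transpose_mul_cons {m n : ℕ} (s : ℝ)
    (Y : Fin m → Fin n → ℝ) :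
    ∫⁻ v : Fin n → ℝ, ENNReal.ofReal
        ((1 + (of (Fin.cons v Y : Fin (m + 1) → Fin n → ℝ))ᵀ * of (Fin.cons v Y)).det ^ (-s)) =
      ENNReal.ofReal ((1 + (of Y)ᵀ * of Y).det ^ (-(s - 1 / 2))) *
        ∫⁻ u : Fin n → ℝ, ENNReal.ofReal ((1 + u ⬝ᵥ u) ^ (-s)) := by
  set A := 1 + (of Y)ᵀ * of Y
  have hA : A.PosDef := posDef_one_add_transpose_mul (of Y)
  have hdetA_rpow (t : ℝ) : 0 ≤ A.det ^ t := Real.rpow_nonneg hA.det_pos.le t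
  have hsplit (v : Fin n → ℝ) :
      ENNReal.ofReal
          ((1 + (of (Fin.cons v Y : Fin (m + 1) → Fin n → ℝ))ᵀ * of (Fin.cons v Y)).det ^ (-s)) =
        ENNReal.ofReal (A.det ^ (-s)) * ENNReal.ofReal ((1 + v ⬝ᵥ (A⁻¹ *ᵥ v)) ^ (-s)) := by
    have hquad : 0 ≤ v ⬝ᵥ (A⁻¹ *ᵥ v) := by
      simpa using hA.inv.posSemidef.dotProduct_mulVec_nonneg v
    rw [transpose_mul_self_of_cons, ← add_assoc, det_add_vecMulVec hA.det_pos.ne'.isUnit,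
      Real.mul_rpow hA.det_pos.le (by linarith), ENNReal.ofReal_mul (hdetA_rpow _)]
  rw [lintegral_congr hsplit, lintegral_const_mul' _ _ ENNReal.ofReal_ne_top,
    lintegral_comp_dotProduct_inv_mulVec hA (f := fun t => ENNReal.ofReal ((1 + t) ^ (-s)))
      (by fun_prop),
    ← mul_assoc, ← ENNReal.ofReal_mul (hdetA_rpow _), Real.sqrt_eq_rpow,
    ← Real.rpow_add hA.det_pos]
  ring_nf

lemma lintegral_ofReal_rpow_neg_det_one_add_transpose_mul_lt_top {n : ℕ} :
    ∀ {m : ℕ} {s : ℝ}, (n + m - 1 : ℝ) < 2 * s →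
      ∫⁻ X : Fin m → Fin n → ℝ, ENNReal.ofReal ((1 + (of X)ᵀ * of X).det ^ (-s)) < ⊤
  | 0, s, _ => by simp
  | m + 1, s, hs => by
    have hrow : ∫⁻ u : Fin n → ℝ, ENNReal.ofReal ((1 + u ⬝ᵥ u) ^ (-s)) < ⊤ :=
      (integrable_rpow_neg_one_add_dotProduct_self (by
        rw [Fintype.card_fin]; push_cast at hs; linarith [m.cast_nonneg (α := ℝ)])).lintegral_lt_top
    have hrest := lintegral_ofReal_rpow_neg_det_one_add_transpose_mul_lt_top (n := n) (m := m)
      (s := s - 1 / 2) (by push_cast at hs; linarith)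
    have hsplit := (volume_preserving_piFinSuccAbove (fun _ : Fin (m + 1) => Fin n → ℝ) 0).symm
    rw [← hsplit.lintegral_comp_emb (MeasurableEquiv.measurableEmbedding _), Measure.volume_eq_prod,
      lintegral_prod_symm]
    · simp only [MeasurableEquiv.piFinSuccAbove_symm_apply, Fin.insertNthEquiv_zero]
      refine (lintegral_congr fun Y =>
        lintegral_ofReal_rpow_neg_det_one_add_transpose_mul_cons s Y).trans_lt ?_
      rw [lintegral_mul_const' _ _ hrow.ne]
      exact ENNReal.mul_lt_top hrest hrow
    · exact ((measurable_rpow_det_one_add_transpose_mul _).ennreal_ofReal.comp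
        hsplit.measurable).aemeasurable

lemma integrable_rpow_neg_det_one_add_transpose_mul {m n : ℕ} {s : ℝ}
    (hs : (n + m - 1 : ℝ) < 2 * s) :
    Integrable fun X : Fin m → Fin n → ℝ => (1 + (of X)ᵀ * of X).det ^ (-s) := by
  refine ⟨(measurable_rpow_det_one_add_transpose_mul _).aestronglyMeasurable, ?_⟩
  rw [hasFiniteIntegral_iff_ofReal (.of_forall fun X =>
    Real.rpow_nonneg (posDef_one_add_transpose_mul (of X)).det_pos.le _)]
  exact lintegral_ofReal_rpow_neg_det_one_add_transpose_mul_lt_top hs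

theorem stmt6_general (n : ℕ) (σ : ℝ) :
    ((n : ℝ) - 1 < σ →
      Integrable
        (fun X : Fin n → Fin n → ℝ =>
          ((1 + (Matrix.of X)ᵀ * Matrix.of X).det) ^ (-(σ + n) / 2)) volume) ∧
    (-(1 / 2 : ℝ) < σ →
      MemLp
        (fun X : Fin n → Fin n → ℝ =>
          ((1 + (Matrix.of X)ᵀ * Matrix.of X).det) ^ (-(σ + n) / 2))
        2 volume) := by
  refine ⟨fun hσ => ?_, fun hσ => ?_⟩
  · simpa only [neg_div] using
      integrable_rpow_neg_det_one_add_transpose_mul (s := (σ + n) / 2) (by linarith)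
  · rw [memLp_two_iff_integrable_sq
      (measurable_rpow_det_one_add_transpose_mul _).aestronglyMeasurable]
    refine (integrable_rpow_neg_det_one_add_transpose_mul (s := σ + n) (by linarith)).congr
      (.of_forall fun X => ?_)
    dsimp only
    rw [← Real.rpow_natCast, ← Real.rpow_mul (posDef_one_add_transpose_mul (of X)).det_pos.le]
    ring_nf

/-- The spherical vector `h_σ(X) = det(I + XᵀX)^(−(σ+n)/2)` of the degenerate principal
series of `GL(2n,ℝ)` on `Mₙ(ℝ)` is integrable for `σ > n − 1` and square-integrable
for `σ > −1/2`. -/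
theorem stmt6 (n : ℕ) (hn : 1 ≤ n) (σ : ℝ) :
    ((n : ℝ) - 1 < σ →
      Integrable
        (fun X : Fin n → Fin n → ℝ =>
          ((1 + (Matrix.of X)ᵀ * Matrix.of X).det) ^ (-(σ + n) / 2)) volume) ∧
    (-(1 / 2 : ℝ) < σ →
      MemLp
        (fun X : Fin n → Fin n → ℝ =>
          ((1 + (Matrix.of X)ᵀ * Matrix.of X).det) ^ (-(σ + n) / 2))
        2 volume) :=
  stmt6_general n σ
end

section
/- Let n ≥ 1 and let σ, τ ∈ ℝ satisfy n < τ < σ + 1. Then the double integral ∫_{M_n(ℝ)} ∫_{M_n(ℝ)} det(I_n + XᵀX)^{−(σ+n)/2} det(I_n + YᵀY)^{−(σ+n)/2} |det(X − Y)|^{τ−n} dX dY converges (is finite), where both integrals are over the space M_n(ℝ) of n×n real matrices with Lebesgue measure. -/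
/-!
The key pointwise bound is `det (X - Y) ^ 2 ≤ det (1 + XᵀX) * det (1 + YᵀY)`: with
`Z = [1 1; Y X]` one has `det Z = det (X - Y)`, and `ZᵀZ` is positive semidefinite with diagonal
blocks `1 + YᵀY` and `1 + XᵀX`, so Fischer's inequality applies. Hence the integrand is at most
`h (X) * h (Y)` with `h (X) = det (1 + XᵀX) ^ (-(σ + 2n - τ) / 2)`.

For `X` with `m` rows and `k` columns, `det (1 + XᵀX) ^ (-s / 2)` is integrable as soon as
`s > k + m - 1`, by induction on `m`: splitting off a row `r` gives `1 + XᵀX = A + r rᵀ`, and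
the substitution `r = S y` with `S Sᵀ = A` turns `det (A + r rᵀ)` into `det A * (1 + |y|²)`, so
integrating out `r` leaves a constant times `det A ^ (-(s - 1) / 2)`.
-/

open MeasureTheory Matrix

open scoped MatrixOrder

namespace Matrix

variable {m ι : Type*}

theorem transpose_mul_self_cons {R : Type*} [CommSemiring R] {k : ℕ} (r : ι → R)
    (X : Fin k → ι → R) :
    (of (Fin.cons r X : Fin (k + 1) → ι → R))ᵀ * of (Fin.cons r X : Fin (k + 1) → ι → R) =
      (of X)ᵀ * of X + vecMulVec r r := by
  ext i j
  simp [mul_apply, Fin.sum_univ_succ, vecMulVec_apply, add_comm]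

variable [Fintype ι]

theorem mul_vecMulVec_mul_transpose {R : Type*} [CommSemiring R] (S : Matrix ι ι R)
    (u v : ι → R) : S * vecMulVec u v * Sᵀ = vecMulVec (S *ᵥ u) (S *ᵥ v) := by
  rw [vecMulVec_eq (Fin 1), vecMulVec_eq (Fin 1), replicateCol_mulVec, replicateRow_mulVec,
    transpose_mul, transpose_replicateCol]
  simp only [Matrix.mul_assoc]

variable [DecidableEq ι]

theorem det_one_add_vecMulVec {R : Type*} [CommRing R] (u v : ι → R) :
    (1 + vecMulVec u v).det = 1 + v ⬝ᵥ u := by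
  rw [vecMulVec_eq (Fin 1), det_one_add_replicateCol_mul_replicateRow]

theorem det_mul_transpose_add_vecMulVec {R : Type*} [CommRing R] (S : Matrix ι ι R)
    (y : ι → R) :
    (S * Sᵀ + vecMulVec (S *ᵥ y) (S *ᵥ y)).det = (S * Sᵀ).det * (1 + y ⬝ᵥ y) := by
  rw [← mul_vecMulVec_mul_transpose,
    show S * Sᵀ + S * vecMulVec y y * Sᵀ = S * (1 + vecMulVec y y) * Sᵀ by
      rw [Matrix.mul_add, Matrix.add_mul, Matrix.mul_one],
    det_mul, det_mul, det_mul, det_one_add_vecMulVec]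
  ring

theorem one_le_det_one_add {K : Matrix ι ι ℝ} (hK : K.PosSemidef) : 1 ≤ (1 + K).det := by
  have h : 1 + K = cfc (fun x : ℝ => 1 + x) K := by
    rw [cfc_add .., cfc_const_one .., cfc_id' ..]
  rw [h, hK.1.cfc_eq]
  simp only [IsHermitian.cfc, det_map, det_diagonal]
  exact Finset.one_le_prod fun i _ => by simpa using hK.eigenvalues_nonneg i

theorem PosSemidef.det_le_det_add {S N : Matrix ι ι ℝ} (hS : S.PosSemidef) (hN : N.PosSemidef) :
    S.det ≤ (S + N).det := by
  rcases eq_or_ne S.det 0 with h | h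
  · simpa [h] using (hS.add hN).det_nonneg
  set R := CFC.sqrt N
  have hRR : R * R = N := CFC.sqrt_mul_sqrt_self N hN.nonneg
  have hR : Rᴴ = R := (CFC.sqrt_nonneg N).posSemidef.isHermitian
  have hK : (R * S⁻¹ * R).PosSemidef := by
    simpa only [hR] using hS.inv.conjTranspose_mul_mul_same R
  calc S.det = S.det * 1 := (mul_one _).symm
    _ ≤ S.det * (1 + R * S⁻¹ * R).det :=
      mul_le_mul_of_nonneg_left (one_le_det_one_add hK) hS.det_nonneg
    _ = (S + N).det := by rw [← hRR, det_add_mul R R h.isUnit]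

/-- Fischer's inequality. -/
theorem PosSemidef.det_fromBlocks_le [Fintype m] [DecidableEq m] {A : Matrix m m ℝ}
    {B : Matrix m ι ℝ} {D : Matrix ι ι ℝ} (hA : A.PosDef)
    (h : (fromBlocks A B Bᴴ D).PosSemidef) :
    (fromBlocks A B Bᴴ D).det ≤ A.det * D.det := by
  have := hA.isUnit.invertible
  have hSchur : (D - Bᴴ * A⁻¹ * B).PosSemidef := (PosDef.fromBlocks₁₁ B D hA).mp h
  have hle := hSchur.det_le_det_add (hA.posSemidef.inv.conjTranspose_mul_mul_same B)
  rw [sub_add_cancel] at hle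
  rw [det_fromBlocks₁₁, invOf_eq_nonsing_inv]
  exact mul_le_mul_of_nonneg_left hle hA.det_pos.le

theorem posDef_one_add_transpose_mul_self [Fintype m] (X : Matrix m ι ℝ) :
    (1 + Xᵀ * X).PosDef :=
  PosDef.one.add_posSemidef (by simpa using posSemidef_conjTranspose_mul_self X)

theorem sq_det_sub_le (X Y : Matrix ι ι ℝ) :
    (X - Y).det ^ 2 ≤ (1 + Xᵀ * X).det * (1 + Yᵀ * Y).det := by
  set Z : Matrix (ι ⊕ ι) (ι ⊕ ι) ℝ := fromBlocks 1 1 Y X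
  have hZ : Z.det = (X - Y).det := by rw [det_fromBlocks_one₁₁, Matrix.mul_one]
  have hG : Zᵀ * Z = fromBlocks (1 + Yᵀ * Y) (1 + Yᵀ * X) (1 + Yᵀ * X)ᴴ (1 + Xᵀ * X) := by
    simp [Z, fromBlocks_transpose, fromBlocks_multiply, transpose_add,
      conjTranspose_eq_transpose_of_trivial]
  have hGpsd : (Zᵀ * Z).PosSemidef := by simpa using posSemidef_conjTranspose_mul_self Z
  rw [hG] at hGpsd
  calc (X - Y).det ^ 2 = (Zᵀ * Z).det := by rw [det_mul, det_transpose, hZ, sq]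
    _ ≤ (1 + Yᵀ * Y).det * (1 + Xᵀ * X).det :=
      hG ▸ hGpsd.det_fromBlocks_le (posDef_one_add_transpose_mul_self Y)
    _ = _ := mul_comm _ _

theorem PosSemidef.exists_mul_transpose_eq {A : Matrix ι ι ℝ} (hA : A.PosSemidef) :
    ∃ S : Matrix ι ι ℝ, S * Sᵀ = A := by
  refine ⟨CFC.sqrt A, ?_⟩
  have hS : (CFC.sqrt A)ᴴ = CFC.sqrt A := (CFC.sqrt_nonneg A).posSemidef.isHermitian
  rw [← conjTranspose_eq_transpose_of_trivial, hS, CFC.sqrt_mul_sqrt_self A hA.nonneg]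

end Matrix

section Integrability

variable {ι : Type*} [Fintype ι]

theorem integrable_one_add_dotProduct_self_rpow {s : ℝ} (hs : (Fintype.card ι : ℝ) < s) :
    Integrable (fun y : ι → ℝ => (1 + y ⬝ᵥ y) ^ (-s / 2)) := by
  have hE : Integrable fun x : EuclideanSpace ℝ ι => (1 + ‖x‖ ^ 2) ^ (-s / 2) :=
    integrable_rpow_neg_one_add_norm_sq (by simpa using hs)
  rw [← (PiLp.volume_preserving_toLp ι).integrable_comp_emb
    (MeasurableEquiv.toLp 2 (ι → ℝ)).measurableEmbedding] at hE
  have h : ∀ y : ι → ℝ, ‖WithLp.toLp 2 y‖ ^ 2 = y ⬝ᵥ y := fun y => by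
    simp [EuclideanSpace.norm_sq_eq, dotProduct, ← sq]
  simpa [Function.comp_def, h] using hE

variable [DecidableEq ι]

theorem measurableEmbedding_toLin' {S : Matrix ι ι ℝ} (hS : S.det ≠ 0) :
    MeasurableEmbedding (toLin' S) :=
  (LinearMap.isClosedEmbedding_of_injective <| LinearMap.ker_eq_bot.mpr <|
    mulVec_injective_iff_isUnit.mpr <| (isUnit_iff_isUnit_det S).mpr hS.isUnit).measurableEmbedding

theorem integrable_comp_mulVec_iff {S : Matrix ι ι ℝ} (hS : S.det ≠ 0) {g : (ι → ℝ) → ℝ} :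
    Integrable (fun y => g (S *ᵥ y)) ↔ Integrable g := by
  have := (measurableEmbedding_toLin' hS).integrable_map_iff (μ := volume) (g := g)
  rw [Real.map_matrix_volume_pi_eq_smul_volume_pi hS,
    integrable_smul_measure (by simpa using hS) ENNReal.ofReal_ne_top] at this
  exact this.symm

theorem integral_comp_mulVec {S : Matrix ι ι ℝ} (hS : S.det ≠ 0) (g : (ι → ℝ) → ℝ) :
    ∫ y, g (S *ᵥ y) = |S.det|⁻¹ * ∫ x, g x := by
  have := (measurableEmbedding_toLin' hS).integral_map (μ := volume) g
  rw [Real.map_matrix_volume_pi_eq_smul_volume_pi hS, integral_smul_measure] at this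
  simpa [abs_inv] using this.symm

theorem det_mul_transpose_add_vecMulVec_rpow {S : Matrix ι ι ℝ} (hS : (S * Sᵀ).PosDef)
    (s : ℝ) (y : ι → ℝ) :
    (S * Sᵀ + vecMulVec (S *ᵥ y) (S *ᵥ y)).det ^ (-s / 2) =
      (S * Sᵀ).det ^ (-s / 2) * (1 + y ⬝ᵥ y) ^ (-s / 2) := by
  rw [det_mul_transpose_add_vecMulVec, Real.mul_rpow hS.det_pos.le]
  exact add_nonneg zero_le_one (Finset.sum_nonneg fun i _ => mul_self_nonneg (y i))

theorem integrable_det_add_vecMulVec_self_rpow {A : Matrix ι ι ℝ} (hA : A.PosDef) {s : ℝ}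
    (hs : (Fintype.card ι : ℝ) < s) :
    Integrable (fun r : ι → ℝ => (A + vecMulVec r r).det ^ (-s / 2)) := by
  obtain ⟨S, rfl⟩ := hA.posSemidef.exists_mul_transpose_eq
  have hS : S.det ≠ 0 := fun h => hA.det_pos.ne' (by rw [det_mul, h, zero_mul])
  rw [← integrable_comp_mulVec_iff hS]
  simp only [det_mul_transpose_add_vecMulVec_rpow hA]
  exact (integrable_one_add_dotProduct_self_rpow hs).const_mul _

theorem integral_det_add_vecMulVec_self_rpow {A : Matrix ι ι ℝ} (hA : A.PosDef) (s : ℝ) :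
    ∫ r : ι → ℝ, (A + vecMulVec r r).det ^ (-s / 2) =
      (∫ y : ι → ℝ, (1 + y ⬝ᵥ y) ^ (-s / 2)) * A.det ^ (-(s - 1) / 2) := by
  obtain ⟨S, rfl⟩ := hA.posSemidef.exists_mul_transpose_eq
  have hS : S.det ≠ 0 := fun h => hA.det_pos.ne' (by rw [det_mul, h, zero_mul])
  have habs : |S.det| = (S * Sᵀ).det ^ (1 / 2 : ℝ) := by
    rw [← Real.sqrt_eq_rpow, det_mul, det_transpose, Real.sqrt_mul_self_eq_abs]
  have h := integral_comp_mulVec hS fun r => (S * Sᵀ + vecMulVec r r).det ^ (-s / 2)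
  simp only [det_mul_transpose_add_vecMulVec_rpow hA, integral_const_mul] at h
  rw [eq_inv_mul_iff_mul_eq₀ (abs_ne_zero.mpr hS)] at h
  rw [← h, habs, ← mul_assoc, ← Real.rpow_add hA.det_pos, mul_comm]
  congr 2
  ring

theorem measurable_det_one_add_transpose_mul_self_rpow {m : Type*} [Fintype m] (t : ℝ) :
    Measurable fun X : m → ι → ℝ => (1 + (of X)ᵀ * of X).det ^ t :=
  (by fun_prop : Continuous fun X : m → ι → ℝ => (1 + (of X)ᵀ * of X).det).measurable.pow_const t

theorem integrable_det_one_add_transpose_mul_self_rpow_succ {k : ℕ} {s : ℝ}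
    (hs : (Fintype.card ι : ℝ) < s)
    (h : Integrable fun X : Fin k → ι → ℝ => (1 + (of X)ᵀ * of X).det ^ (-(s - 1) / 2)) :
    Integrable fun X : Fin (k + 1) → ι → ℝ => (1 + (of X)ᵀ * of X).det ^ (-s / 2) := by
  have he := (volume_preserving_piFinSuccAbove (fun _ : Fin (k + 1) => ι → ℝ) 0).symm
  have hmeas := (measurable_det_one_add_transpose_mul_self_rpow (m := Fin (k + 1)) (ι := ι)
    (-s / 2)).aestronglyMeasurable.comp_measurePreserving he
  rw [← he.integrable_comp_emb (MeasurableEquiv.measurableEmbedding _), Measure.volume_eq_prod,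
    integrable_prod_iff' hmeas]
  have hcons : ∀ (r : ι → ℝ) (X : Fin k → ι → ℝ),
      1 + (of (Fin.consEquiv _ (r, X)))ᵀ * of (Fin.consEquiv (fun _ => ι → ℝ) (r, X)) =
        (1 + (of X)ᵀ * of X) + vecMulVec r r := fun r X => by
    rw [add_assoc, ← transpose_mul_self_cons]
    rfl
  simp only [Function.comp_apply, MeasurableEquiv.piFinSuccAbove_symm_apply,
    Fin.insertNthEquiv_zero, hcons]
  have hA := posDef_one_add_transpose_mul_self (m := Fin k) (ι := ι)
  have hnorm : ∀ (r : ι → ℝ) (X : Fin k → ι → ℝ),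
      ‖(1 + (of X)ᵀ * of X + vecMulVec r r).det ^ (-s / 2)‖ =
        (1 + (of X)ᵀ * of X + vecMulVec r r).det ^ (-s / 2) := fun r X =>
    Real.norm_of_nonneg <| Real.rpow_nonneg
      ((hA _).posSemidef.add (by simpa using posSemidef_vecMulVec_self_star r)).det_nonneg _
  refine ⟨ae_of_all _ fun X => integrable_det_add_vecMulVec_self_rpow (hA _) hs, ?_⟩
  simp only [hnorm, integral_det_add_vecMulVec_self_rpow (hA _)]
  exact h.const_mul _

theorem integrable_det_one_add_transpose_mul_self_rpow :
    ∀ {k : ℕ} {s : ℝ}, (Fintype.card ι + k - 1 : ℝ) < s →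
      Integrable fun X : Fin k → ι → ℝ => (1 + (of X)ᵀ * of X).det ^ (-s / 2)
  | 0, s, _ => by
    have h0 : ∀ X : Fin 0 → ι → ℝ, (of X)ᵀ * of X = 0 := fun X => by ext; simp [mul_apply]
    simp only [h0, add_zero, det_one, Real.one_rpow]
    rw [Measure.volume_pi_eq_dirac 0]
    exact integrable_const 1
  | k + 1, s, hs => by
    push_cast at hs
    exact integrable_det_one_add_transpose_mul_self_rpow_succ
      (by linarith [(k.cast_nonneg : (0 : ℝ) ≤ k)])
      (integrable_det_one_add_transpose_mul_self_rpow (by linarith))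

end Integrability

theorem rpow_mul_rpow_mul_abs_rpow_le {a b d c p : ℝ} (ha : 0 < a) (hb : 0 < b)
    (hd : d ^ 2 ≤ a * b) (hp : 0 ≤ p) :
    a ^ c * b ^ c * |d| ^ p ≤ a ^ (c + p / 2) * b ^ (c + p / 2) := by
  have hab : 0 ≤ a * b := by positivity
  have hd' : |d| ^ p ≤ (a * b) ^ (p / 2) :=
    calc |d| ^ p ≤ ((a * b) ^ (1 / 2 : ℝ)) ^ p := by
          refine Real.rpow_le_rpow (abs_nonneg d) ?_ hp
          rw [← Real.sqrt_eq_rpow, ← Real.sqrt_sq_eq_abs]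
          exact Real.sqrt_le_sqrt hd
      _ = (a * b) ^ (p / 2) := by rw [← Real.rpow_mul hab]; ring_nf
  calc a ^ c * b ^ c * |d| ^ p ≤ a ^ c * b ^ c * (a * b) ^ (p / 2) := by gcongr
    _ = a ^ (c + p / 2) * b ^ (c + p / 2) := by
      rw [Real.mul_rpow ha.le hb.le, Real.rpow_add ha, Real.rpow_add hb]
      ring

theorem stmt10_general (n : ℕ) (σ τ : ℝ) (h₁ : (n : ℝ) < τ) (h₂ : τ < σ + 1) :
    Integrable
      (fun P : (Fin n → Fin n → ℝ) × (Fin n → Fin n → ℝ) =>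
        ((1 + (Matrix.of P.1)ᵀ * Matrix.of P.1).det) ^ (-(σ + n) / 2) *
          ((1 + (Matrix.of P.2)ᵀ * Matrix.of P.2).det) ^ (-(σ + n) / 2) *
          |(Matrix.of P.1 - Matrix.of P.2).det| ^ (τ - n))
      volume := by
  have h := integrable_det_one_add_transpose_mul_self_rpow (ι := Fin n) (k := n)
    (s := σ + 2 * n - τ) (by simp only [Fintype.card_fin]; linarith)
  have hmeas := measurable_det_one_add_transpose_mul_self_rpow (m := Fin n) (ι := Fin n)
  have hdet : Measurable fun P : (Fin n → Fin n → ℝ) × (Fin n → Fin n → ℝ) =>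
      (of P.1 - of P.2).det := (by fun_prop : Continuous _).measurable
  rw [Measure.volume_eq_prod]
  refine (h.mul_prod h).mono' ?_ (ae_of_all _ fun P => ?_)
  · exact (((hmeas _).comp measurable_fst).mul ((hmeas _).comp measurable_snd)).mul
      (hdet.abs.pow_const _) |>.aestronglyMeasurable
  · have ha := (posDef_one_add_transpose_mul_self (of P.1)).det_pos
    have hb := (posDef_one_add_transpose_mul_self (of P.2)).det_pos
    have hbound := rpow_mul_rpow_mul_abs_rpow_le (c := -(σ + n) / 2) ha hb
      (sq_det_sub_le (of P.1) (of P.2)) (sub_nonneg.mpr h₁.le)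
    rw [Real.norm_of_nonneg (mul_nonneg (mul_nonneg (Real.rpow_nonneg ha.le _)
      (Real.rpow_nonneg hb.le _)) (Real.rpow_nonneg (abs_nonneg _) _))]
    convert hbound using 3 <;> ring

/-- Convergence of the hermitian pairing of spherical vectors: for `n < τ < σ + 1`, the
double integral `∫∫ det(I+XᵀX)^(−(σ+n)/2) det(I+YᵀY)^(−(σ+n)/2) |det(X−Y)|^(τ−n) dX dY`
over `Mₙ(ℝ) × Mₙ(ℝ)` is finite. -/
theorem stmt10 (n : ℕ) (hn : 1 ≤ n) (σ τ : ℝ) (h₁ : (n : ℝ) < τ) (h₂ : τ < σ + 1) :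
    Integrable
      (fun P : (Fin n → Fin n → ℝ) × (Fin n → Fin n → ℝ) =>
        ((1 + (Matrix.of P.1)ᵀ * Matrix.of P.1).det) ^ (-(σ + n) / 2) *
          ((1 + (Matrix.of P.2)ᵀ * Matrix.of P.2).det) ^ (-(σ + n) / 2) *
          |(Matrix.of P.1 - Matrix.of P.2).det| ^ (τ - n))
      volume :=
  stmt10_general n σ τ h₁ h₂
end
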